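/- arXiv:2511.09982 — 3 statements merged into one kernel-verified Lean document; each statement's English description precedes it below -/
import Mathlib

section
/- The Reidemeister spectrum of the dicyclic group Dic₃ of order 12 (the dicyclic group with presentation ⟨a, b | a³ = b⁴ = 1, b⁻¹ a b = a²⟩, i.e. the quaternion-type group QuaternionGroup 3 in Mathlib) is {4, 6}. -/
/-- Two elements `x, y` are `φ`-conjugate if `x = g * y * (φ g)⁻¹` for some `g`. -/
def twistedConj {G : Type*} [Group G] (φ : G ≃* G) (x y : G) : Prop :=
  ∃ g : G, x = g * y * (φ g)⁻¹

/-- The Reidemeister number `R(φ)`: the number of `φ`-conjugacy classes. -/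
noncomputable def reidemeisterNumber {G : Type*} [Group G] (φ : G ≃* G) : ℕ :=
  Nat.card (Quot (twistedConj φ))

/-- The Reidemeister spectrum `Spec_R(G) = {R(φ) : φ ∈ Aut(G)}`. -/
def reidemeisterSpectrum (G : Type*) [Group G] : Set ℕ :=
  { k | ∃ φ : G ≃* G, reidemeisterNumber φ = k }

/-! For odd `n`, every automorphism of `QuaternionGroup n` has the form `a i ↦ a (s * i)`,
`xa i ↦ xa (s * i + t)` with `s` a unit: comparing orders forces `a 1 ↦ a s` and
`xa 0 ↦ xa t`, and `xa 0 ^ 2 = a n` forces `s * n = n`. For `n = 3` this leaves twelve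
automorphisms, whose Reidemeister numbers are finite computations, each giving 4 or 6, and
both values occur. -/

open QuaternionGroup

section Reidemeister

variable {G : Type*} [Group G]

theorem twistedConj_equivalence (φ : G ≃* G) : Equivalence (twistedConj φ) where
  refl _ := ⟨1, by simp⟩
  symm := by
    rintro _ _ ⟨g, rfl⟩
    exact ⟨g⁻¹, by simp [mul_assoc]⟩
  trans := by
    rintro _ _ _ ⟨g, rfl⟩ ⟨k, rfl⟩
    exact ⟨g * k, by simp [mul_assoc]⟩

def twistedConjSetoid (φ : G ≃* G) : Setoid G := ⟨twistedConj φ, twistedConj_equivalence φ⟩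

instance [Fintype G] [DecidableEq G] (φ : G ≃* G) :
    DecidableRel (twistedConjSetoid φ).r :=
  fun _ _ => Fintype.decidableExistsFintype

theorem reidemeisterNumber_eq_card [Fintype G] [DecidableEq G] (φ : G ≃* G) :
    reidemeisterNumber φ = Fintype.card (Quotient (twistedConjSetoid φ)) :=
  Nat.card_eq_fintype_card (α := Quotient (twistedConjSetoid φ))

end Reidemeister

namespace QuaternionGroup

variable {n : ℕ}

theorem a_pow (i : ZMod (2 * n)) (k : ℕ) :
    (a i : QuaternionGroup n) ^ k = a (i * (k : ZMod (2 * n))) := by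
  induction k with
  | zero => rw [pow_zero, Nat.cast_zero, mul_zero, a_zero]
  | succ k ih => rw [pow_succ, ih, a_mul_a, Nat.cast_succ, mul_add_one]

def affineFun (s t : ZMod (2 * n)) : QuaternionGroup n → QuaternionGroup n
  | a i => a (s * i)
  | xa i => xa (s * i + t)

section AffineEquiv

variable (s : (ZMod (2 * n))ˣ) (t : ZMod (2 * n))
  (hs : (s : ZMod (2 * n)) * n = (n : ZMod (2 * n)))

def affineEquiv : QuaternionGroup n ≃* QuaternionGroup n where
  toFun := affineFun s t
  invFun := affineFun ↑s⁻¹ (-(↑s⁻¹ * t))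
  left_inv x := by cases x <;> simp [affineFun, mul_add, ← mul_assoc]
  right_inv x := by cases x <;> simp [affineFun, mul_add, ← mul_assoc]
  map_mul' x y := by
    rcases x with i | i <;> rcases y with j | j <;>
      simp only [affineFun, a_mul_a, a_mul_xa, xa_mul_a, xa_mul_xa] <;> congr 1
    · ring
    · ring
    · ring
    · linear_combination hs

@[simp]
theorem affineEquiv_a (i : ZMod (2 * n)) :
    affineEquiv s t hs (a i) = a ((s : ZMod (2 * n)) * i) := rfl

@[simp]
theorem affineEquiv_xa (i : ZMod (2 * n)) :
    affineEquiv s t hs (xa i) = xa ((s : ZMod (2 * n)) * i + t) := rfl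

end AffineEquiv

theorem hom_ext [NeZero n] {M : Type*} [Monoid M] {f g : QuaternionGroup n →* M}
    (ha : f (a 1) = g (a 1)) (hxa : f (xa 0) = g (xa 0)) : f = g := by
  have hA (i : ZMod (2 * n)) : f (a i) = g (a i) := by
    rw [← ZMod.natCast_zmod_val i, ← a_one_pow, map_pow, map_pow, ha]
  ext (i | i)
  · exact hA i
  · rw [← zero_add i, ← xa_mul_a, map_mul, map_mul, hxa, hA]

theorem isUnit_of_orderOf_a_eq [NeZero n] {i : ZMod (2 * n)} (h : orderOf (a i) = 2 * n) :
    IsUnit i := by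
  rw [orderOf_a, Nat.div_eq_self] at h
  have hcop : i.val.Coprime (2 * n) := by
    rw [Nat.coprime_comm]
    exact h.resolve_left (NeZero.ne _)
  simpa using (ZMod.isUnit_iff_coprime _ _).2 hcop

theorem exists_unit_eq_a_of_orderOf_eq [NeZero n] (hn : n ≠ 2) {x : QuaternionGroup n}
    (hx : orderOf x = 2 * n) : ∃ s : (ZMod (2 * n))ˣ, x = a s := by
  rcases x with i | i
  · obtain ⟨s, rfl⟩ := isUnit_of_orderOf_a_eq hx
    exact ⟨s, rfl⟩
  · rw [orderOf_xa] at hx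
    omega

theorem exists_eq_xa_of_orderOf_eq_four (hn : Odd n) {x : QuaternionGroup n}
    (hx : orderOf x = 4) : ∃ t, x = xa t := by
  have : NeZero n := ⟨hn.pos.ne'⟩
  rcases x with i | i
  · have h4 : 4 ∣ 2 * n := hx ▸ orderOf_a i ▸ Nat.div_dvd_of_dvd (Nat.gcd_dvd_left _ _)
    obtain ⟨k, rfl⟩ := hn
    omega
  · exact ⟨i, rfl⟩

theorem exists_eq_affineEquiv (hn : Odd n) (φ : QuaternionGroup n ≃* QuaternionGroup n) :
    ∃ s t hs, φ = affineEquiv s t hs := by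
  have : NeZero n := ⟨hn.pos.ne'⟩
  obtain ⟨s, hs⟩ := exists_unit_eq_a_of_orderOf_eq (by rintro rfl; norm_num at hn)
    (by rw [MulEquiv.orderOf_eq, orderOf_a_one] : orderOf (φ (a 1)) = 2 * n)
  obtain ⟨t, ht⟩ := exists_eq_xa_of_orderOf_eq_four hn
    (by rw [MulEquiv.orderOf_eq, orderOf_xa] : orderOf (φ (xa 0)) = 4)
  have hsn : (s : ZMod (2 * n)) * n = (n : ZMod (2 * n)) := by
    refine a.inj ?_
    calc a ((s : ZMod (2 * n)) * (n : ZMod (2 * n)))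
      _ = φ (a 1 ^ n) := by rw [map_pow, hs, a_pow]
      _ = φ (xa 0 ^ 2) := by rw [a_one_pow, xa_sq]
      _ = a n := by rw [map_pow, ht, xa_sq]
  exact ⟨s, t, hsn, MulEquiv.toMonoidHom_injective (hom_ext (by simp [hs]) (by simp [ht]))⟩

theorem reidemeisterNumber_affineEquiv_eq_four_or_six (s : (ZMod 6)ˣ) (t : ZMod 6)
    (hs : (s : ZMod 6) * 3 = 3) :
    reidemeisterNumber (affineEquiv (n := 3) s t hs) = 4 ∨
      reidemeisterNumber (affineEquiv (n := 3) s t hs) = 6 := by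
  rw [reidemeisterNumber_eq_card]
  revert s t hs
  decide

theorem reidemeisterNumber_affineEquiv_one_one :
    reidemeisterNumber (affineEquiv (n := 3) 1 1 (one_mul _)) = 4 := by
  rw [reidemeisterNumber_eq_card]
  decide

theorem reidemeisterNumber_refl_quaternionGroup_three :
    reidemeisterNumber (MulEquiv.refl (QuaternionGroup 3)) = 6 := by
  rw [reidemeisterNumber_eq_card]
  decide

end QuaternionGroup

/-- **Example 1.2.** The Reidemeister spectrum of the dicyclic group
`Dic₃ = ZM(3,4,2)` of order 12 (`QuaternionGroup 3` in Mathlib) is `{4, 6}`. -/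
theorem reidemeisterSpectrum_dic3 :
    reidemeisterSpectrum (QuaternionGroup 3) = {4, 6} := by
  ext k
  constructor
  · rintro ⟨φ, rfl⟩
    obtain ⟨s, t, hs, rfl⟩ := exists_eq_affineEquiv (by decide) φ
    exact reidemeisterNumber_affineEquiv_eq_four_or_six s t hs
  · rintro (rfl | rfl)
    exacts [⟨_, reidemeisterNumber_affineEquiv_one_one⟩,
      ⟨_, reidemeisterNumber_refl_quaternionGroup_three⟩]
end

section
/- Let m, n, r be positive integers with gcd(m,n) = gcd(m, r-1) = 1 and r^n ≡ 1 (mod m), and let d = o_m(r). Every automorphism of ZM(m,n,r) is of the form b^u a^v ↦ b^{yu} a^{x₁v + x₂[u]_r} (u, v ≥ 0) for a unique triple of integers (x₁, x₂, y) satisfying 0 ≤ x₁, x₂ < m, gcd(x₁, m) = 1, 0 ≤ y < n and y ≡ 1 (mod d). -/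
/-!
Every element of `ZM(m,n,r)` is `b^u a^v`, and `(u mod n, v mod m)` is determined by it: `u` is
read off in the quotient `a ↦ 0, b ↦ 1` onto `ℤ/n`, and `v` through the action on `ℤ/m` in which
`a` is translation by `1`, which shows that `a` has order `m`. As `gcd(m,n) = 1`, an element of
order dividing `m` lies in `⟨a⟩`, so an automorphism sends `a ↦ a^x₁` with `x₁` a unit mod `m`
and `b ↦ b^y a^x₂`. Applied to `a b = b a^r` this forces `r^y ≡ r (mod m)`, i.e. `y ≡ 1 (mod d)`,
and then `(b^y a^x₂)^u = b^(yu) a^(x₂ [u]_r)` gives the formula. The triple is recovered from the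
images of `a` and `b`.
-/

/-- The relators of the ZM-group presentation `⟨a, b ∣ a^m = b^n = 1, b⁻¹ a b = a^r⟩`,
with `true ↦ a` and `false ↦ b`. -/
def zmRels (m n r : ℕ) : Set (FreeGroup Bool) :=
  { FreeGroup.of true ^ m,
    FreeGroup.of false ^ n,
    (FreeGroup.of false)⁻¹ * FreeGroup.of true * FreeGroup.of false * (FreeGroup.of true ^ r)⁻¹ }

/-- The ZM-group `ZM(m,n,r)` as a presented group. -/
abbrev ZMGroup (m n r : ℕ) := PresentedGroup (zmRels m n r)

/-- The generator `a` of `ZM(m,n,r)`. -/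
def zmA (m n r : ℕ) : ZMGroup m n r := PresentedGroup.of true

/-- The generator `b` of `ZM(m,n,r)`. -/
def zmB (m n r : ℕ) : ZMGroup m n r := PresentedGroup.of false

/-- `[u]_r = 1 + r + ⋯ + r^(u-1)`, with `[0]_r = 0`. -/
def repunit (r u : ℕ) : ℕ := ∑ i ∈ Finset.range u, r ^ i

theorem IsOfFinOrder.coprime_of_orderOf_pow_eq {G : Type*} [Monoid G] {g : G} {x : ℕ}
    (hg : IsOfFinOrder g) (h : orderOf (g ^ x) = orderOf g) : x.Coprime (orderOf g) := by
  rw [hg.orderOf_pow, Nat.div_eq_self] at h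
  exact Nat.coprime_comm.mp (h.resolve_left hg.orderOf_pos.ne')

theorem modEq_one_orderOf_of_pow_modEq_self {m n r y : ℕ} (hn : 0 < n) (hrn : r ^ n ≡ 1 [MOD m])
    (hry : r ^ y ≡ r [MOD m]) : y ≡ 1 [MOD orderOf (r : ZMod m)] := by
  have hfin : IsOfFinOrder (r : ZMod m) := isOfFinOrder_iff_pow_eq_one.mpr
    ⟨n, hn, by exact_mod_cast (ZMod.natCast_eq_natCast_iff _ _ _).mpr hrn⟩
  rw [← hfin.pow_eq_pow_iff_modEq, pow_one]
  exact_mod_cast (ZMod.natCast_eq_natCast_iff _ _ _).mpr hry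

namespace ZMGroup

variable {m n r : ℕ}

local notation "𝐚" => zmA m n r
local notation "𝐛" => zmB m n r

theorem mk_eq_one_of_mem_zmRels {x : FreeGroup Bool} (hx : x ∈ zmRels m n r) :
    PresentedGroup.mk (zmRels m n r) x = 1 :=
  (QuotientGroup.eq_one_iff x).mpr (Subgroup.subset_normalClosure hx)

theorem zmA_pow_self : 𝐚 ^ m = 1 := by
  have h := mk_eq_one_of_mem_zmRels (m := m) (n := n) (r := r) (Set.mem_insert _ _)
  rwa [map_pow] at h

theorem zmB_pow_self : 𝐛 ^ n = 1 := by
  have h := mk_eq_one_of_mem_zmRels (m := m) (n := n) (r := r)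
    (Set.mem_insert_of_mem _ (Set.mem_insert _ _))
  rwa [map_pow] at h

theorem zmA_mul_zmB : 𝐚 * 𝐛 = 𝐛 * 𝐚 ^ r := by
  have h := mk_eq_one_of_mem_zmRels (m := m) (n := n) (r := r)
    (Set.mem_insert_of_mem _ (Set.mem_insert_of_mem _ rfl))
  simp only [map_mul, map_inv, map_pow, mul_inv_eq_one] at h
  change 𝐛⁻¹ * 𝐚 * 𝐛 = 𝐚 ^ r at h
  rw [← h]
  group

theorem zmA_pow_mul_zmB (v : ℕ) : 𝐚 ^ v * 𝐛 = 𝐛 * 𝐚 ^ (v * r) := by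
  induction v with
  | zero => simp
  | succ v ih => rw [pow_succ, mul_assoc, zmA_mul_zmB, ← mul_assoc, ih, mul_assoc, ← pow_add,
      add_one_mul]

theorem zmA_pow_mul_zmB_pow (v u : ℕ) : 𝐚 ^ v * 𝐛 ^ u = 𝐛 ^ u * 𝐚 ^ (v * r ^ u) := by
  induction u generalizing v with
  | zero => simp
  | succ u ih => rw [pow_succ', ← mul_assoc, zmA_pow_mul_zmB, mul_assoc, ih, ← mul_assoc,
      pow_succ', mul_assoc v, mul_comm r]

theorem nf_mul_nf (u v u' v' : ℕ) :
    (𝐛 ^ u * 𝐚 ^ v) * (𝐛 ^ u' * 𝐚 ^ v') = 𝐛 ^ (u + u') * 𝐚 ^ (v * r ^ u' + v') := by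
  rw [mul_assoc, ← mul_assoc (𝐚 ^ v), zmA_pow_mul_zmB_pow, pow_add, pow_add]
  group

theorem exists_nf (hm : 0 < m) (hn : 0 < n) (g : ZMGroup m n r) :
    ∃ u v : ℕ, g = 𝐛 ^ u * 𝐚 ^ v := by
  have hg : g ∈ Subgroup.closure (Set.range (PresentedGroup.of (rels := zmRels m n r))) := by
    rw [PresentedGroup.closure_range_of]; trivial
  induction hg using Subgroup.closure_induction'' with
  | mem x hx =>
    obtain ⟨_ | _, rfl⟩ := hx
    · exact ⟨1, 0, by simp [zmB]⟩
    · exact ⟨0, 1, by simp [zmA]⟩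
  | inv_mem x hx =>
    obtain ⟨_ | _, rfl⟩ := hx
    · refine ⟨n - 1, 0, ?_⟩
      change 𝐛⁻¹ = _
      rw [pow_zero, mul_one, eq_comm, ← mul_eq_one_iff_eq_inv, ← pow_succ, Nat.sub_add_cancel hn,
        zmB_pow_self]
    · refine ⟨0, m - 1, ?_⟩
      change 𝐚⁻¹ = _
      rw [pow_zero, one_mul, eq_comm, ← mul_eq_one_iff_eq_inv, ← pow_succ, Nat.sub_add_cancel hm,
        zmA_pow_self]
  | one => exact ⟨0, 0, by simp⟩
  | mul x y _ _ hx hy =>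
    obtain ⟨u, v, rfl⟩ := hx
    obtain ⟨u', v', rfl⟩ := hy
    exact ⟨u + u', v * r ^ u' + v', nf_mul_nf u v u' v'⟩

section Lift

variable {G : Type*} [Group G] (α β : G)

def lift (hα : α ^ m = 1) (hβ : β ^ n = 1) (hαβ : β⁻¹ * α * β = α ^ r) :
    ZMGroup m n r →* G :=
  PresentedGroup.toGroup (f := fun c => cond c α β) <| by
    simp only [zmRels, Set.mem_insert_iff, Set.mem_singleton_iff]
    rintro _ (rfl | rfl | rfl) <;> simp [hα, hβ, hαβ]

variable {α β} (hα : α ^ m = 1) (hβ : β ^ n = 1) (hαβ : β⁻¹ * α * β = α ^ r)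

@[simp]
theorem lift_zmA : lift α β hα hβ hαβ 𝐚 = α :=
  PresentedGroup.toGroup.of _

@[simp]
theorem lift_zmB : lift α β hα hβ hαβ 𝐛 = β :=
  PresentedGroup.toGroup.of _

end Lift

def toZMod : ZMGroup m n r →* Multiplicative (ZMod n) :=
  lift 1 (Multiplicative.ofAdd 1) (one_pow m)
    (by rw [← ofAdd_nsmul, nsmul_one, ZMod.natCast_self, ofAdd_zero]) (by simp)

theorem toZMod_nf (u v : ℕ) :
    toZMod (𝐛 ^ u * 𝐚 ^ v) = Multiplicative.ofAdd (u : ZMod n) := by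
  simp [toZMod, ← ofAdd_nsmul]

/-- `a` acts on `ℤ/m` as `x ↦ x + 1` and `b⁻¹` as `x ↦ r x`, so `b⁻¹ a b` is `x ↦ x + r`. -/
def toPerm (hn : 0 < n) (hrn : r ^ n ≡ 1 [MOD m]) : ZMGroup m n r →* Equiv.Perm (ZMod m) :=
  have hr : (r : ZMod m) ^ n = 1 := by
    exact_mod_cast (ZMod.natCast_eq_natCast_iff _ _ _).mpr hrn
  let ρ : (ZMod m)ˣ := Units.ofPowEqOne _ n hr hn.ne'
  have hρ : (ρ : ZMod m) = r := Units.val_ofPowEqOne _ n hr hn.ne'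
  lift (Equiv.addRight 1) (MulAction.toPermHom (ZMod m)ˣ (ZMod m) ρ⁻¹)
    (by rw [Equiv.nsmul_addRight, nsmul_one, ZMod.natCast_self, Equiv.addRight_zero])
    (by rw [← map_pow, inv_pow, Units.pow_ofPowEqOne, inv_one, map_one])
    (by ext x; simp [Units.smul_def, ← hρ])

theorem toPerm_zmA_pow_apply_zero (hn : 0 < n) (hrn : r ^ n ≡ 1 [MOD m]) (k : ℕ) :
    toPerm hn hrn (𝐚 ^ k) 0 = k := by
  simp [toPerm]

theorem zmA_pow_eq_one_iff (hn : 0 < n) (hrn : r ^ n ≡ 1 [MOD m]) {k : ℕ} :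
    𝐚 ^ k = 1 ↔ m ∣ k := by
  refine ⟨fun h => ?_, fun ⟨c, hc⟩ => by rw [hc, pow_mul, zmA_pow_self, one_pow]⟩
  rw [← ZMod.natCast_eq_zero_iff, ← toPerm_zmA_pow_apply_zero hn hrn, h, map_one,
    Equiv.Perm.one_apply]

theorem orderOf_zmA (hn : 0 < n) (hrn : r ^ n ≡ 1 [MOD m]) : orderOf 𝐚 = m :=
  Nat.dvd_right_iff_eq.mp fun _ => by rw [orderOf_dvd_iff_pow_eq_one, zmA_pow_eq_one_iff hn hrn]

theorem nf_eq_nf_iff (hn : 0 < n) (hrn : r ^ n ≡ 1 [MOD m]) {u v u' v' : ℕ} :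
    𝐛 ^ u * 𝐚 ^ v = 𝐛 ^ u' * 𝐚 ^ v' ↔ u ≡ u' [MOD n] ∧ v ≡ v' [MOD m] := by
  constructor
  · intro h
    have hu : u ≡ u' [MOD n] := by
      simpa [ZMod.natCast_eq_natCast_iff, toZMod_nf] using congrArg toZMod h
    rw [pow_eq_pow_of_modEq hu zmB_pow_self, mul_right_inj, pow_eq_pow_iff_modEq,
      orderOf_zmA hn hrn] at h
    exact ⟨hu, h⟩
  · rintro ⟨hu, hv⟩
    rw [pow_eq_pow_of_modEq hu zmB_pow_self, pow_eq_pow_of_modEq hv zmA_pow_self]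

theorem exists_nf_lt (hm : 0 < m) (hn : 0 < n) (g : ZMGroup m n r) :
    ∃ u < n, ∃ v < m, g = 𝐛 ^ u * 𝐚 ^ v := by
  obtain ⟨u, v, rfl⟩ := exists_nf hm hn g
  refine ⟨u % n, Nat.mod_lt u hn, v % m, Nat.mod_lt v hm, ?_⟩
  rw [pow_eq_pow_of_modEq (Nat.mod_modEq u n) zmB_pow_self,
    pow_eq_pow_of_modEq (Nat.mod_modEq v m) zmA_pow_self]

theorem exists_eq_zmA_pow_of_pow_eq_one (hm : 0 < m) (hn : 0 < n) (hmn : Nat.gcd m n = 1)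
    {g : ZMGroup m n r} (hg : g ^ m = 1) : ∃ x < m, g = 𝐚 ^ x := by
  obtain ⟨u, hu, x, hx, rfl⟩ := exists_nf_lt hm hn g
  have hu0 : (u : ZMod n) = 0 := by
    have := congrArg toZMod hg
    rw [map_pow, toZMod_nf, ← ofAdd_nsmul, map_one, ofAdd_eq_one, nsmul_eq_mul] at this
    exact ((ZMod.unitOfCoprime m hmn).isUnit.mul_right_eq_zero).mp this
  rw [ZMod.natCast_eq_zero_iff] at hu0
  rw [Nat.eq_zero_of_dvd_of_lt hu0 hu]
  exact ⟨x, hx, by rw [pow_zero, one_mul]⟩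

theorem repunit_succ (u : ℕ) : repunit r (u + 1) = r ^ u + repunit r u :=
  geom_sum_succ'

theorem nf_pow {y : ℕ} (hry : r ^ y ≡ r [MOD m]) (x u : ℕ) :
    (𝐛 ^ y * 𝐚 ^ x) ^ u = 𝐛 ^ (y * u) * 𝐚 ^ (x * repunit r u) := by
  induction u with
  | zero => simp [repunit]
  | succ u ih =>
    have hexp : x * r ^ (y * u) + x * repunit r u ≡ x * repunit r (u + 1) [MOD m] := by
      rw [repunit_succ, mul_add, pow_mul]
      exact ((hry.pow u).mul_left x).add_right _
    rw [pow_succ', ih, nf_mul_nf, pow_eq_pow_of_modEq hexp zmA_pow_self, mul_add_one y, add_comm y]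

section Endomorphism

variable {φ : ZMGroup m n r →* ZMGroup m n r} {x₁ x₂ y : ℕ}

theorem pow_modEq_self_of_map (hn : 0 < n) (hrn : r ^ n ≡ 1 [MOD m]) (ha : φ 𝐚 = 𝐚 ^ x₁)
    (hb : φ 𝐛 = 𝐛 ^ y * 𝐚 ^ x₂) (hx₁ : x₁.Coprime m) : r ^ y ≡ r [MOD m] := by
  have h := congrArg φ zmA_mul_zmB
  rw [map_mul, map_mul, map_pow, ha, hb, ← mul_assoc, zmA_pow_mul_zmB_pow, mul_assoc, ← pow_add,
    mul_assoc, ← pow_mul, ← pow_add, nf_eq_nf_iff hn hrn, add_comm x₂] at h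
  exact Nat.ModEq.cancel_left_of_coprime (Nat.coprime_comm.mp hx₁) (h.2.add_right_cancel' x₂)

theorem map_nf (ha : φ 𝐚 = 𝐚 ^ x₁) (hb : φ 𝐛 = 𝐛 ^ y * 𝐚 ^ x₂) (hry : r ^ y ≡ r [MOD m])
    (u v : ℕ) : φ (𝐛 ^ u * 𝐚 ^ v) = 𝐛 ^ (y * u) * 𝐚 ^ (x₁ * v + x₂ * repunit r u) := by
  rw [map_mul, map_pow, map_pow, ha, hb, nf_pow hry, mul_assoc, ← pow_mul, ← pow_add, add_comm]

end Endomorphism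

theorem coprime_of_map_zmA (hm : 0 < m) (hn : 0 < n) (hrn : r ^ n ≡ 1 [MOD m])
    (f : ZMGroup m n r ≃* ZMGroup m n r) {x : ℕ} (hfa : f 𝐚 = 𝐚 ^ x) : x.Coprime m := by
  have hfin : IsOfFinOrder 𝐚 := isOfFinOrder_iff_pow_eq_one.mpr ⟨m, hm, zmA_pow_self⟩
  rw [← orderOf_zmA hn hrn]
  exact hfin.coprime_of_orderOf_pow_eq (by rw [← hfa, MulEquiv.orderOf_eq])

end ZMGroup

open ZMGroup

theorem zmGroup_aut_unique_triple_general (m n r : ℕ) (hm : 0 < m) (hn : 0 < n)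
    (hmn : Nat.gcd m n = 1) (hrn : r ^ n ≡ 1 [MOD m])
    (f : ZMGroup m n r ≃* ZMGroup m n r) :
    ∃! t : ℕ × ℕ × ℕ,
      (t.1 < m ∧ t.2.1 < m ∧ Nat.gcd t.1 m = 1 ∧ t.2.2 < n ∧
        t.2.2 ≡ 1 [MOD orderOf (r : ZMod m)]) ∧
      ∀ u v : ℕ, f (zmB m n r ^ u * zmA m n r ^ v) =
        zmB m n r ^ (t.2.2 * u) * zmA m n r ^ (t.1 * v + t.2.1 * repunit r u) := by
  obtain ⟨x₁, hx₁, hfa⟩ := exists_eq_zmA_pow_of_pow_eq_one hm hn hmn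
    (g := f (zmA m n r)) (by rw [← map_pow, zmA_pow_self, map_one])
  obtain ⟨y, hy, x₂, hx₂, hfb⟩ := exists_nf_lt hm hn (f (zmB m n r))
  have hcop : x₁.Coprime m := coprime_of_map_zmA hm hn hrn f hfa
  have hry : r ^ y ≡ r [MOD m] := pow_modEq_self_of_map (φ := f.toMonoidHom) hn hrn hfa hfb hcop
  have hform := map_nf (φ := f.toMonoidHom) hfa hfb hry
  refine ⟨(x₁, x₂, y), ⟨⟨hx₁, hx₂, hcop, hy, modEq_one_orderOf_of_pow_modEq_self hn hrn hry⟩,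
    hform⟩, ?_⟩
  rintro ⟨x₁', x₂', y'⟩ ⟨⟨hx₁', hx₂', -, hy', -⟩, hF⟩
  obtain ⟨-, h₁⟩ := (nf_eq_nf_iff hn hrn).mp ((hF 0 1).symm.trans (hform 0 1))
  obtain ⟨h₃, h₂⟩ := (nf_eq_nf_iff hn hrn).mp ((hF 1 0).symm.trans (hform 1 0))
  simp only [repunit, Finset.sum_range_zero, Finset.sum_range_one, pow_zero, mul_zero, mul_one,
    add_zero, zero_add] at h₁ h₂ h₃
  rw [Prod.mk.injEq, Prod.mk.injEq]
  exact ⟨h₁.eq_of_lt_of_lt hx₁' hx₁, h₂.eq_of_lt_of_lt hx₂' hx₂, h₃.eq_of_lt_of_lt hy' hy⟩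

/-- **Theorem 2.1.** Every automorphism of `ZM(m,n,r)` is given by
`b^u a^v ↦ b^(yu) a^(x₁ v + x₂ [u]_r)` for a unique triple `(x₁, x₂, y)` with
`0 ≤ x₁, x₂ < m`, `gcd(x₁, m) = 1`, `0 ≤ y < n` and `y ≡ 1 (mod d)`, where `d = o_m(r)`. -/
theorem zmGroup_aut_unique_triple (m n r : ℕ) (hm : 0 < m) (hn : 0 < n) (hr : 0 < r)
    (hmn : Nat.gcd m n = 1) (hmr : Nat.gcd m (r - 1) = 1) (hrn : r ^ n ≡ 1 [MOD m])
    (f : ZMGroup m n r ≃* ZMGroup m n r) :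
    ∃! t : ℕ × ℕ × ℕ,
      (t.1 < m ∧ t.2.1 < m ∧ Nat.gcd t.1 m = 1 ∧ t.2.2 < n ∧
        t.2.2 ≡ 1 [MOD orderOf (r : ZMod m)]) ∧
      ∀ u v : ℕ, f (zmB m n r ^ u * zmA m n r ^ v) =
        zmB m n r ^ (t.2.2 * u) * zmA m n r ^ (t.1 * v + t.2.1 * repunit r u) :=
  zmGroup_aut_unique_triple_general m n r hm hn hmn hrn f
end

section
/- Let m, n, r be positive integers with gcd(m,n) = gcd(m, r-1) = 1 and r^n ≡ 1 (mod m), and let d = o_m(r). Then the center of ZM(m,n,r) is the cyclic subgroup generated by b^d, i.e. Z(ZM(m,n,r)) = ⟨b^d⟩. -/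
namespace ZMAux

variable (m n r : ℕ)

theorem rel_one {x : FreeGroup Bool} (hx : x ∈ zmRels m n r) :
    PresentedGroup.mk (zmRels m n r) x = 1 :=
  (QuotientGroup.eq_one_iff _).mpr (Subgroup.subset_normalClosure hx)

theorem zmA_pow : zmA m n r ^ m = 1 := by
  have h := rel_one m n r (x := FreeGroup.of true ^ m) (by simp [zmRels])
  rw [map_pow] at h
  exact h

theorem zmB_pow : zmB m n r ^ n = 1 := by
  have h := rel_one m n r (x := FreeGroup.of false ^ n) (by simp [zmRels])
  rw [map_pow] at h
  exact h

theorem zm_conj :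
    (zmB m n r)⁻¹ * zmA m n r * zmB m n r = zmA m n r ^ r := by
  have h := rel_one m n r
    (x := (FreeGroup.of false)⁻¹ * FreeGroup.of true * FreeGroup.of false *
      (FreeGroup.of true ^ r)⁻¹) (by simp [zmRels])
  simp only [map_mul, map_inv, map_pow] at h
  exact mul_inv_eq_one.mp h

theorem hab : zmA m n r * zmB m n r = zmB m n r * zmA m n r ^ r := by
  rw [← zm_conj m n r]
  group

theorem exch_one (i : ℕ) :
    zmA m n r ^ i * zmB m n r = zmB m n r * zmA m n r ^ (i * r) := by
  induction i with
  | zero => simp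
  | succ k ih =>
    rw [pow_succ, mul_assoc, hab, ← mul_assoc, ih, mul_assoc, ← pow_add, Nat.succ_mul]

theorem exch (i j : ℕ) :
    zmA m n r ^ i * zmB m n r ^ j = zmB m n r ^ j * zmA m n r ^ (i * r ^ j) := by
  induction j with
  | zero => simp
  | succ k ih =>
    rw [pow_succ, ← mul_assoc, ih, mul_assoc, exch_one, ← mul_assoc, ← pow_succ,
      mul_assoc i, ← pow_succ]

theorem normal_form (hm : 0 < m) (hn : 0 < n) (g : ZMGroup m n r) :
    ∃ i j : ℕ, g = zmB m n r ^ j * zmA m n r ^ i := by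
  have hAinv : ∀ i : ℕ, (zmA m n r ^ i)⁻¹ = zmA m n r ^ (i * (m - 1)) := by
    intro i
    refine inv_eq_of_mul_eq_one_right ?_
    rw [← pow_add]
    have he : i + i * (m - 1) = m * i := by
      calc i + i * (m - 1) = i * (1 + (m - 1)) := by ring
        _ = i * m := by rw [Nat.add_sub_cancel' hm]
        _ = m * i := Nat.mul_comm _ _
    rw [he, pow_mul, zmA_pow, one_pow]
  have hBinv : ∀ j : ℕ, (zmB m n r ^ j)⁻¹ = zmB m n r ^ (j * (n - 1)) := by
    intro j
    refine inv_eq_of_mul_eq_one_right ?_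
    rw [← pow_add]
    have he : j + j * (n - 1) = n * j := by
      calc j + j * (n - 1) = j * (1 + (n - 1)) := by ring
        _ = j * n := by rw [Nat.add_sub_cancel' hn]
        _ = n * j := Nat.mul_comm _ _
    rw [he, pow_mul, zmB_pow, one_pow]
  let H : Subgroup (ZMGroup m n r) :=
    { carrier := {g | ∃ i j : ℕ, g = zmB m n r ^ j * zmA m n r ^ i}
      one_mem' := ⟨0, 0, by simp⟩
      mul_mem' := by
        rintro x y ⟨i, j, rfl⟩ ⟨k, l, rfl⟩
        refine ⟨i * r ^ l + k, j + l, ?_⟩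
        rw [mul_assoc, ← mul_assoc (zmA m n r ^ i), exch, pow_add, pow_add]
        simp only [mul_assoc]
      inv_mem' := by
        rintro x ⟨i, j, rfl⟩
        refine ⟨i * (m - 1) * r ^ (j * (n - 1)), j * (n - 1), ?_⟩
        rw [mul_inv_rev, hAinv, hBinv, exch] }
  exact PresentedGroup.generated_by _ H
    (fun x => by
      cases x
      · exact ⟨0, 1, by simp [zmA, zmB]⟩
      · exact ⟨1, 0, by simp [zmA, zmB]⟩) g

end ZMAux

/-- The center of `ZM(m,n,r)` is the cyclic subgroup generated by `b^d`, where `d = o_m(r)`. -/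
theorem center_zmGroup (m n r : ℕ) (hm : 0 < m) (hn : 0 < n) (hr : 0 < r)
    (hmn : Nat.gcd m n = 1) (hmr : Nat.gcd m (r - 1) = 1) (hrn : r ^ n ≡ 1 [MOD m]) :
    Subgroup.center (ZMGroup m n r) =
      Subgroup.zpowers (zmB m n r ^ orderOf (r : ZMod m)) := by
  haveI : NeZero m := ⟨hm.ne'⟩
  set d := orderOf (r : ZMod m) with hd
  -- basic facts about r mod m
  have hu1 : ((r : ZMod m)) ^ n = 1 := by
    have := (ZMod.natCast_eq_natCast_iff _ _ _).mpr hrn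
    push_cast at this
    exact this
  have hru : IsUnit ((r : ZMod m)) := IsUnit.of_pow_eq_one hu1 hn.ne'
  set u : (ZMod m)ˣ := hru.unit with hudef
  have huval : (u : ZMod m) = (r : ZMod m) := hru.unit_spec
  have hun : u ^ n = 1 := by
    ext
    push_cast [huval]
    exact hu1
  -- the permutation representation
  set A : Equiv.Perm (ZMod m) := Equiv.addRight (1 : ZMod m) with hAdef
  set B : Equiv.Perm (ZMod m) :=
    ⟨fun x => (u⁻¹ : (ZMod m)ˣ) * x, fun x => (u : ZMod m) * x,
      fun x => by simp [← mul_assoc], fun x => by simp [← mul_assoc]⟩ with hBdef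
  have hA1 : ∀ x : ZMod m, A x = x + 1 := fun x => rfl
  have hB1 : ∀ x : ZMod m, B x = (u⁻¹ : (ZMod m)ˣ) * x := fun x => rfl
  have hBi1 : ∀ x : ZMod m, B⁻¹ x = (u : ZMod m) * x := fun x => rfl
  have hAap : ∀ (i : ℕ) (x : ZMod m), (A ^ i) x = x + i := by
    intro i
    induction i with
    | zero => simp
    | succ k ih =>
      intro x
      rw [pow_succ, Equiv.Perm.mul_apply, hA1, ih]
      push_cast
      ring
  have hBap : ∀ (j : ℕ) (x : ZMod m), (B ^ j) x = ((u⁻¹ ^ j : (ZMod m)ˣ) : ZMod m) * x := by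
    intro j
    induction j with
    | zero => simp
    | succ k ih =>
      intro x
      rw [pow_succ, Equiv.Perm.mul_apply, hB1, ih]
      push_cast [pow_succ]
      ring
  have hrel : ∀ x ∈ zmRels m n r,
      FreeGroup.lift (fun t : Bool => cond t A B) x = 1 := by
    intro x hx
    simp only [zmRels, Set.mem_insert_iff, Set.mem_singleton_iff] at hx
    rcases hx with rfl | rfl | rfl
    · rw [map_pow, FreeGroup.lift_apply_of]
      show A ^ m = 1
      ext x
      rw [hAap]
      simp
    · rw [map_pow, FreeGroup.lift_apply_of]
      show B ^ n = 1
      ext x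
      rw [hBap]
      simp [hun]
    · simp only [map_mul, map_inv, map_pow, FreeGroup.lift_apply_of]
      show B⁻¹ * A * B * (A ^ r)⁻¹ = 1
      rw [mul_inv_eq_one]
      ext x
      rw [Equiv.Perm.mul_apply, Equiv.Perm.mul_apply, hB1, hA1, hBi1, hAap,
        mul_add, mul_one, ← mul_assoc, Units.mul_inv, one_mul, huval]
  let π : ZMGroup m n r →* Equiv.Perm (ZMod m) := PresentedGroup.toGroup hrel
  have hπA : π (zmA m n r) = A := PresentedGroup.toGroup.of hrel
  have hπB : π (zmB m n r) = B := PresentedGroup.toGroup.of hrel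
  ext g
  constructor
  · intro hg
    obtain ⟨i, j, rfl⟩ := ZMAux.normal_form m n r hm hn g
    have ha := Subgroup.mem_center_iff.mp hg (zmA m n r)
    have hb := Subgroup.mem_center_iff.mp hg (zmB m n r)
    have ha' := congrArg π ha
    have hb' := congrArg π hb
    simp only [map_mul, map_pow, hπA, hπB] at ha' hb'
    -- evaluate the `a`-commutation at 0 : gives u⁻¹^j = 1
    have h0 : (A * (B ^ j * A ^ i)) 0 = (B ^ j * A ^ i * A) 0 := by rw [ha']
    simp only [Equiv.Perm.mul_apply, hA1, hAap, hBap] at h0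
    have hv : ((u⁻¹ ^ j : (ZMod m)ˣ) : ZMod m) = 1 := by linear_combination -h0
    have huj : u ^ j = 1 := by
      have := Units.val_eq_one.mp hv
      rwa [inv_pow, inv_eq_one] at this
    have hrj : ((r : ZMod m)) ^ j = 1 := by
      have := congrArg Units.val huj
      push_cast [huval] at this
      exact this
    have hdj : d ∣ j := orderOf_dvd_of_pow_eq_one hrj
    -- evaluate the `b`-commutation at 0 : gives (r-1) * i = 0
    have h1 : (B * (B ^ j * A ^ i)) 0 = (B ^ j * A ^ i * B) 0 := by rw [hb']
    simp only [Equiv.Perm.mul_apply, hB1, hAap, hBap, hv] at h1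
    -- h1 : ↑u⁻¹ * (1 * (0 + i)) = 1 * (↑u⁻¹ * 0 + i)  (roughly)
    have h2 : ((r : ZMod m) - 1) * (i : ZMod m) = 0 := by
      have h3 := congrArg (fun z => (u : ZMod m) * z) h1
      rw [← mul_assoc, Units.mul_inv, one_mul] at h3
      rw [sub_mul, one_mul, ← huval]
      linear_combination -h3
    have him : (i : ZMod m) = 0 := by
      have hco : Nat.Coprime (r - 1) m := (Nat.coprime_comm.mp hmr)
      set w : (ZMod m)ˣ := ZMod.unitOfCoprime (r - 1) hco with hwdef
      have hwval : (w : ZMod m) = ((r - 1 : ℕ) : ZMod m) := ZMod.coe_unitOfCoprime _ _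
      have hw2 : (w : ZMod m) = (r : ZMod m) - 1 := by
        rw [hwval, Nat.cast_sub hr, Nat.cast_one]
      calc (i : ZMod m) = (w⁻¹ : (ZMod m)ˣ) * ((w : ZMod m) * i) := by
            rw [← mul_assoc, Units.inv_mul, one_mul]
        _ = 0 := by rw [hw2, h2, mul_zero]
    have hmi : m ∣ i := (ZMod.natCast_eq_zero_iff i m).mp him
    obtain ⟨c, rfl⟩ := hmi
    obtain ⟨e, rfl⟩ := hdj
    rw [pow_mul, pow_mul, ZMAux.zmA_pow, one_pow, mul_one]
    exact Subgroup.pow_mem _ (Subgroup.mem_zpowers _) e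
  · intro hg
    have hbd : zmB m n r ^ d ∈ Subgroup.center (ZMGroup m n r) := by
      rw [Subgroup.mem_center_iff]
      intro g'
      obtain ⟨i, j, rfl⟩ := ZMAux.normal_form m n r hm hn g'
      have hcomm : zmA m n r ^ i * zmB m n r ^ d = zmB m n r ^ d * zmA m n r ^ i := by
        rw [ZMAux.exch]
        congr 1
        have h1 : r ^ d ≡ 1 [MOD m] := by
          rw [← ZMod.natCast_eq_natCast_iff]
          push_cast
          exact pow_orderOf_eq_one (r : ZMod m)
        have h2 : i * r ^ d ≡ i [MOD m] := by
          calc i * r ^ d ≡ i * 1 [MOD m] := Nat.ModEq.mul_left i h1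
            _ = i := Nat.mul_one i
        rw [pow_eq_pow_iff_modEq]
        exact Nat.ModEq.of_dvd (orderOf_dvd_of_pow_eq_one (ZMAux.zmA_pow m n r)) h2
      calc zmB m n r ^ j * zmA m n r ^ i * zmB m n r ^ d
          = zmB m n r ^ j * (zmB m n r ^ d * zmA m n r ^ i) := by
            rw [mul_assoc, hcomm]
        _ = zmB m n r ^ d * (zmB m n r ^ j * zmA m n r ^ i) := by
            rw [← mul_assoc, ← pow_add, Nat.add_comm, pow_add, mul_assoc]
    exact (Subgroup.zpowers_le.mpr hbd) hg
end
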